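/- For every finite simple graph G, the fractional matching number satisfies 2·μ_f(G) = |V(G)| − max{ iso(G−S) − |S| : S ⊆ V(G) }. -/

import Mathlib

open Finset

namespace SCF

variable {V : Type*}

/-- Degree of `v` in `F` (as the cardinality of its neighbor set). -/
noncomputable def deg [Fintype V] (F : SimpleGraph V) (v : V) : ℕ :=
  (F.neighborSet v).ncard

/-- Number of isolated vertices of `G - S`. -/
noncomputable def iso [Fintype V] (G : SimpleGraph V) (S : Set V) : ℕ :=
  {v | v ∉ S ∧ ∀ w, G.Adj v w → w ∈ S}.ncard

/-- The component of `v` in `F` is a single edge `K_{1,1}`. -/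
def IsK11Comp [Fintype V] (F : SimpleGraph V) (v : V) : Prop :=
  deg F v = 1 ∧ ∀ w, F.Adj v w → deg F w = 1

/-- The component of `v` in `F` is a path on three vertices `K_{1,2}`. -/
def IsK12Comp [Fintype V] (F : SimpleGraph V) (v : V) : Prop :=
  ∃ c a b, a ≠ b ∧ F.Adj c a ∧ F.Adj c b ∧ deg F c = 2 ∧ deg F a = 1 ∧ deg F b = 1 ∧
    (v = c ∨ v = a ∨ v = b)

/-- The component of `v` in `F` is a cycle (2-regular connected, so length ≥ 3). -/
def IsCycleComp [Fintype V] (F : SimpleGraph V) (v : V) : Prop :=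
  ∀ w, F.Reachable v w → deg F w = 2

/-- The component of `v` in `F` is an odd cycle. -/
def IsOddCycleComp [Fintype V] (F : SimpleGraph V) (v : V) : Prop :=
  IsCycleComp F v ∧ Odd {w | F.Reachable v w}.ncard

/-- The component of `v` in `F` is a star `K_{1,i}` for some `i ≥ 1`. -/
def IsStarComp [Fintype V] (F : SimpleGraph V) (v : V) : Prop :=
  ∃ c, (v = c ∨ F.Adj c v) ∧ 0 < deg F c ∧ ∀ w, F.Adj c w → deg F w = 1

/-- The component of `v` in `F` is a star `K_{1,i}` with `1 ≤ i ≤ n`. -/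
def IsStarAtMostComp [Fintype V] (F : SimpleGraph V) (n : ℕ) (v : V) : Prop :=
  ∃ c, (v = c ∨ F.Adj c v) ∧ 0 < deg F c ∧ deg F c ≤ n ∧ ∀ w, F.Adj c w → deg F w = 1

/-- `F` is a `{K_{1,1}, C_m : m ≥ 3}`-factor of `G`. -/
def IsK11CycleFactor [Fintype V] (G F : SimpleGraph V) : Prop :=
  F ≤ G ∧ ∀ v, IsK11Comp F v ∨ IsCycleComp F v

/-- `F` is a `{K_{1,1}, K_{1,2}, C_m : m ≥ 3}`-factor of `G`. -/
def IsK11K12CycleFactor [Fintype V] (G F : SimpleGraph V) : Prop :=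
  F ≤ G ∧ ∀ v, IsK11Comp F v ∨ IsK12Comp F v ∨ IsCycleComp F v

/-- Number of `K_{1,2}`-components of `F`, counted by their centers. -/
noncomputable def countK12 [Fintype V] (F : SimpleGraph V) : ℕ :=
  {v | deg F v = 2 ∧ ∀ w, F.Adj v w → deg F w = 1}.ncard

/-- `min(G, K_{1,2})`: the minimum number of `K_{1,2}`-components over all
`{K_{1,1}, K_{1,2}, C_m : m ≥ 3}`-factors of `G`. -/
noncomputable def minK12 [Fintype V] (G : SimpleGraph V) : ℕ :=
  sInf {t | ∃ F, IsK11K12CycleFactor G F ∧ countK12 F = t}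

/-- `f` is a fractional matching of `G`. -/
def IsFracMatching [Fintype V] [DecidableEq V] (G : SimpleGraph V) [DecidableRel G.Adj]
    (f : Sym2 V → ℝ) : Prop :=
  (∀ e, 0 ≤ f e ∧ f e ≤ 1) ∧ (∀ e, e ∉ G.edgeSet → f e = 0) ∧
    ∀ v : V, ∑ e ∈ G.edgeFinset, (if v ∈ e then f e else 0) ≤ 1

/-- Total weight of a fractional matching. -/
def weight [Fintype V] [DecidableEq V] (G : SimpleGraph V) [DecidableRel G.Adj]
    (f : Sym2 V → ℝ) : ℝ :=
  ∑ e ∈ G.edgeFinset, f e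

/-- The fractional matching number `μ_f(G)`. -/
noncomputable def nuF [Fintype V] [DecidableEq V] (G : SimpleGraph V) [DecidableRel G.Adj] : ℝ :=
  sSup (weight G '' {f | IsFracMatching G f})

/-- `f` is a maximum fractional matching of `G`. -/
def IsMaxFracMatching [Fintype V] [DecidableEq V] (G : SimpleGraph V) [DecidableRel G.Adj]
    (f : Sym2 V → ℝ) : Prop :=
  IsFracMatching G f ∧ weight G f = nuF G

/-- `s` is an independent set of vertices of `G`. -/
def IsIndepSet (G : SimpleGraph V) (s : Set V) : Prop :=
  ∀ ⦃u⦄, u ∈ s → ∀ ⦃w⦄, w ∈ s → ¬ G.Adj u w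

/-- The independence number `α(G)`. -/
noncomputable def alpha [Fintype V] (G : SimpleGraph V) : ℕ :=
  sSup {n | ∃ s : Set V, IsIndepSet G s ∧ s.ncard = n}

/-- `G` has a proper edge coloring with `k` colors. -/
def HasProperEdgeColoring (G : SimpleGraph V) (k : ℕ) : Prop :=
  ∃ c : Sym2 V → Fin k, ∀ e₁ ∈ G.edgeSet, ∀ e₂ ∈ G.edgeSet,
    e₁ ≠ e₂ → ∀ v : V, v ∈ e₁ → v ∈ e₂ → c e₁ ≠ c e₂

/-- The chromatic index `χ'(G)`: the minimum number of colors (equivalently matchings)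
needed to properly color the edges of `G`. -/
noncomputable def chromIdx (G : SimpleGraph V) : ℕ :=
  sInf {k | HasProperEdgeColoring G k}

/-- `G` is a `k`-critical graph. -/
def IsCriticalWith [Fintype V] (G : SimpleGraph V) [DecidableRel G.Adj] (k : ℕ) : Prop :=
  2 ≤ k ∧ G.maxDegree = k ∧ chromIdx G = k + 1 ∧
    ∀ H : SimpleGraph V, H < G → chromIdx H ≤ k

/-- `G` is an edge-chromatic critical graph. -/
def IsCritical [Fintype V] (G : SimpleGraph V) [DecidableRel G.Adj] : Prop :=
  ∃ k, IsCriticalWith G k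

/-- `G` is factor-critical: deleting any vertex leaves a graph with a perfect matching. -/
def IsFactorCritical (G : SimpleGraph V) : Prop :=
  ∀ v : V, ∃ M : G.Subgraph, M.verts = {v}ᶜ ∧ M.IsMatching

end SCF

open SCF

section Aux

open SCF Finset

variable {V : Type*} [Fintype V] [DecidableEq V] (G : SimpleGraph V) [DecidableRel G.Adj]

/-- the deficiency set -/
def defSet : Set ℕ := {d : ℕ | ∃ S : Set V, iso G S = S.ncard + d}

lemma defSet_nonempty : (defSet G).Nonempty :=
  ⟨iso G (∅ : Set V), ⟨∅, by simp [Set.ncard_empty]⟩⟩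

lemma iso_le_card (S : Set V) : iso G S ≤ Fintype.card V := by
  rw [iso]
  calc _ ≤ (Set.univ : Set V).ncard := Set.ncard_le_ncard (by intro x _; trivial) (Set.toFinite _)
  _ = Fintype.card V := by rw [Set.ncard_univ, Nat.card_eq_fintype_card]

lemma defSet_bddAbove : BddAbove (defSet G) := by
  refine ⟨Fintype.card V, fun d hd => ?_⟩
  obtain ⟨S, hS⟩ := hd
  have := iso_le_card G S
  omega

/-- Hall-type condition from the deficiency bound. -/
lemma hall_cond (s : Finset V) :
    s.card ≤ (s.biUnion (fun v => G.neighborFinset v)).card + sSup (defSet G) := by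
  set N := s.biUnion (fun v => G.neighborFinset v) with hN
  by_cases hle : s.card ≤ N.card
  · omega
  · push_neg at hle
    set T := s \ N with hT
    set S0 : Set V := ↑(T.biUnion (fun v => G.neighborFinset v)) with hS0
    -- every vertex of T is isolated in G - S0
    have hTiso : (↑T : Set V) ⊆ {v | v ∉ S0 ∧ ∀ w, G.Adj v w → w ∈ S0} := by
      intro v hv
      simp only [Finset.coe_sdiff, Set.mem_diff, Finset.mem_coe] at hv
      constructor
      · intro hvS
        simp only [hS0, Finset.coe_biUnion, Set.mem_iUnion, Finset.mem_coe,
          SimpleGraph.mem_neighborFinset] at hvS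
        obtain ⟨u, hu, hadj⟩ := hvS
        rw [hT, Finset.mem_sdiff] at hu
        exact hu.2 (Finset.mem_biUnion.2 ⟨v, by
          rw [hT, Finset.mem_sdiff] at hv; exact hv.1,
          (SimpleGraph.mem_neighborFinset _ _ _).2 hadj.symm⟩) |>.elim
      · intro w hw
        simp only [hS0, Finset.coe_biUnion, Set.mem_iUnion, Finset.mem_coe]
        exact ⟨v, hv, (SimpleGraph.mem_neighborFinset _ _ _).2 hw⟩
    have hisoT : T.card ≤ iso G S0 := by
      rw [iso]
      calc T.card = (↑T : Set V).ncard := (Set.ncard_coe_finset T).symm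
      _ ≤ _ := Set.ncard_le_ncard hTiso (Set.toFinite _)
    -- |Γ(T)| + |s ∩ N| ≤ |N|
    have hdisj : Disjoint (T.biUnion (fun v => G.neighborFinset v)) (s ∩ N) := by
      rw [Finset.disjoint_left]
      intro x hx hxsN
      obtain ⟨u, hu, hadj⟩ := Finset.mem_biUnion.1 hx
      rw [SimpleGraph.mem_neighborFinset] at hadj
      rw [hT, Finset.mem_sdiff] at hu
      exact hu.2 (Finset.mem_biUnion.2 ⟨x, (Finset.mem_inter.1 hxsN).1,
        (SimpleGraph.mem_neighborFinset _ _ _).2 hadj.symm⟩)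
    have hsub : T.biUnion (fun v => G.neighborFinset v) ∪ (s ∩ N) ⊆ N := by
      apply Finset.union_subset
      · intro x hx
        obtain ⟨u, hu, hadj⟩ := Finset.mem_biUnion.1 hx
        rw [hT, Finset.mem_sdiff] at hu
        exact Finset.mem_biUnion.2 ⟨u, hu.1, hadj⟩
      · exact Finset.inter_subset_right
    have hcard1 : (T.biUnion (fun v => G.neighborFinset v)).card + (s ∩ N).card ≤ N.card := by
      rw [← Finset.card_union_of_disjoint hdisj]
      exact Finset.card_le_card hsub
    have hcard2 : T.card + (s ∩ N).card = s.card := by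
      rw [hT]
      exact Finset.card_sdiff_add_card_inter s N
    have hS0card : S0.ncard = (T.biUnion (fun v => G.neighborFinset v)).card := Set.ncard_coe_finset _
    -- the witnessed deficiency
    have hmem : iso G S0 - S0.ncard ∈ defSet G := ⟨S0, by
      have : S0.ncard ≤ iso G S0 := by omega
      omega⟩
    have := le_csSup (defSet_bddAbove G) hmem
    omega

lemma card_filter_mem_edge (e : Sym2 V) (he : e ∈ G.edgeFinset) :
    (Finset.univ.filter (fun v => v ∈ e)).card = 2 := by
  induction e with
  | _ x y =>
    rw [SimpleGraph.mem_edgeFinset, SimpleGraph.mem_edgeSet] at he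
    have : Finset.univ.filter (fun v => v ∈ s(x, y)) = {x, y} := by
      ext w
      simp [Sym2.mem_iff]
    rw [this, Finset.card_pair he.ne]

lemma two_mul_weight (f : Sym2 V → ℝ) :
    2 * weight G f = ∑ v : V, ∑ e ∈ G.edgeFinset, (if v ∈ e then f e else 0) := by
  rw [Finset.sum_comm, weight, Finset.mul_sum]
  refine Finset.sum_congr rfl fun e he => ?_
  rw [← Finset.sum_filter, Finset.sum_const, card_filter_mem_edge G e he]
  push_cast
  ring

/-- The half-integral fractional matching induced by a partial injection `m` on `A`. -/
noncomputable def fm (A : Finset V) (m : V → V) : Sym2 V → ℝ :=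
  fun e => ((A.filter (fun v => s(v, m v) = e)).card : ℝ) / 2

lemma fm_apply (A : Finset V) (m : V → V) (e : Sym2 V) :
    fm A m e = ((A.filter (fun v => s(v, m v) = e)).card : ℝ) / 2 := rfl

lemma fm_card_le_two (A : Finset V) (m : V → V) (e : Sym2 V) :
    (A.filter (fun v => s(v, m v) = e)).card ≤ 2 := by
  induction e with
  | _ x y =>
    have hsub : A.filter (fun v => s(v, m v) = s(x, y)) ⊆ {x, y} := by
      intro v hv
      rw [Finset.mem_filter] at hv
      have : v ∈ s(x, y) := hv.2 ▸ Sym2.mem_mk_left v (m v)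
      rw [Sym2.mem_iff] at this
      simpa using this
    calc _ ≤ ({x, y} : Finset V).card := Finset.card_le_card hsub
    _ ≤ 2 := Finset.card_insert_le x {y} |>.trans (by simp)

lemma fm_frac (A : Finset V) (m : V → V) (hadj : ∀ v ∈ A, G.Adj v (m v))
    (hinj : ∀ a ∈ A, ∀ b ∈ A, m a = m b → a = b) : IsFracMatching G (fm A m) := by
  have hedge : ∀ v ∈ A, s(v, m v) ∈ G.edgeFinset := by
    intro v hv
    rw [SimpleGraph.mem_edgeFinset, SimpleGraph.mem_edgeSet]
    exact hadj v hv
  refine ⟨fun e => ⟨by rw [fm_apply]; positivity, ?_⟩, fun e he => ?_, fun w => ?_⟩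
  · rw [fm_apply]
    have h2 : ((A.filter (fun v => s(v, m v) = e)).card : ℝ) ≤ 2 := by
      exact_mod_cast fm_card_le_two A m e
    linarith
  · rw [fm_apply]
    have : A.filter (fun v => s(v, m v) = e) = ∅ := by
      rw [Finset.filter_eq_empty_iff]
      intro v hv hveq
      exact he (hveq ▸ (SimpleGraph.mem_edgeSet G).2 (hadj v hv))
    simp [this]
  · set B := A.filter (fun v => w ∈ s(v, m v)) with hB
    have key : ∑ e ∈ G.edgeFinset, (if w ∈ e then fm A m e else 0) = (B.card : ℝ) / 2 := by
      have hBcard : B.card = ∑ e ∈ G.edgeFinset, (B.filter (fun v => s(v, m v) = e)).card :=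
        Finset.card_eq_sum_card_fiberwise (fun v hv =>
          hedge v (Finset.mem_filter.1 hv).1)
      rw [hBcard]
      push_cast
      rw [Finset.sum_div]
      refine Finset.sum_congr rfl fun e he => ?_
      by_cases hw : w ∈ e
      · rw [if_pos hw, fm_apply]
        have heq : B.filter (fun v => s(v, m v) = e) = A.filter (fun v => s(v, m v) = e) := by
          rw [hB, Finset.filter_filter]
          apply Finset.filter_congr
          intro v _
          exact ⟨fun h => h.2, fun h => ⟨h.symm ▸ hw, h⟩⟩
        rw [heq]
      · rw [if_neg hw]
        have : B.filter (fun v => s(v, m v) = e) = ∅ := by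
          rw [Finset.filter_eq_empty_iff]
          intro v hv hveq
          rw [hB, Finset.mem_filter] at hv
          exact hw (hveq ▸ hv.2)
        rw [this]
        simp
    rw [key]
    have hBsub : B ⊆ insert w (A.filter (fun v => m v = w)) := by
      intro v hv
      rw [hB, Finset.mem_filter] at hv
      rcases Sym2.mem_iff.1 hv.2 with h | h
      · rw [Finset.mem_insert]; left; exact h.symm
      · exact Finset.mem_insert_of_mem (Finset.mem_filter.2 ⟨hv.1, h.symm⟩)
    have hone : (A.filter (fun v => m v = w)).card ≤ 1 := by
      rw [Finset.card_le_one]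
      intro a ha b hb
      rw [Finset.mem_filter] at ha hb
      exact hinj a ha.1 b hb.1 (ha.2.trans hb.2.symm)
    have h2 : B.card ≤ 2 := by
      have hc1 := Finset.card_le_card hBsub
      have hc2 := Finset.card_insert_le w (A.filter (fun v => m v = w))
      omega
    have h2' : (B.card : ℝ) ≤ 2 := by exact_mod_cast h2
    linarith

lemma fm_weight (A : Finset V) (m : V → V) (hadj : ∀ v ∈ A, G.Adj v (m v)) :
    weight G (fm A m) = (A.card : ℝ) / 2 := by
  have hedge : ∀ v ∈ A, s(v, m v) ∈ G.edgeFinset := by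
    intro v hv
    rw [SimpleGraph.mem_edgeFinset, SimpleGraph.mem_edgeSet]
    exact hadj v hv
  have hAc : A.card = ∑ e ∈ G.edgeFinset, (A.filter (fun v => s(v, m v) = e)).card :=
    Finset.card_eq_sum_card_fiberwise hedge
  rw [weight]
  have : ∀ e ∈ G.edgeFinset, fm A m e = ((A.filter (fun v => s(v, m v) = e)).card : ℝ) / 2 :=
    fun e _ => fm_apply A m e
  rw [Finset.sum_congr rfl this, ← Finset.sum_div, hAc]
  push_cast
  rfl

lemma exists_good_matching :
    ∃ f, IsFracMatching G f ∧ (Fintype.card V : ℝ) - sSup (defSet G) ≤ 2 * weight G f := by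
  classical
  set D := sSup (defSet G) with hD
  set t : V → Finset (V ⊕ Fin D) := fun v =>
    ((G.neighborFinset v).image Sum.inl) ∪ (Finset.univ.image Sum.inr) with ht
  have hall : ∀ s : Finset V, s.card ≤ (s.biUnion t).card := by
    intro s
    rcases s.eq_empty_or_nonempty with rfl | ⟨v0, hv0⟩
    · simp
    have hsub : ((s.biUnion (fun v => G.neighborFinset v)).image Sum.inl)
        ∪ (Finset.univ.image Sum.inr) ⊆ s.biUnion t := by
      apply Finset.union_subset
      · intro x hx
        obtain ⟨u, hu, rfl⟩ := Finset.mem_image.1 hx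
        obtain ⟨w, hw, hu2⟩ := Finset.mem_biUnion.1 hu
        exact Finset.mem_biUnion.2
          ⟨w, hw, Finset.mem_union_left _ (Finset.mem_image_of_mem _ hu2)⟩
      · intro x hx
        exact Finset.mem_biUnion.2 ⟨v0, hv0, Finset.mem_union_right _ hx⟩
    have hdisj : Disjoint ((s.biUnion (fun v => G.neighborFinset v)).image Sum.inl)
        (Finset.univ.image (Sum.inr : Fin D → V ⊕ Fin D)) := by
      rw [Finset.disjoint_left]
      rintro x hx hx2
      obtain ⟨u, _, rfl⟩ := Finset.mem_image.1 hx
      obtain ⟨j, _, h⟩ := Finset.mem_image.1 hx2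
      exact Sum.inr_ne_inl h
    calc s.card ≤ (s.biUnion (fun v => G.neighborFinset v)).card + D := hall_cond G s
    _ = (((s.biUnion (fun v => G.neighborFinset v)).image Sum.inl)
          ∪ (Finset.univ.image (Sum.inr : Fin D → V ⊕ Fin D))).card := by
        rw [Finset.card_union_of_disjoint hdisj,
          Finset.card_image_of_injective _ Sum.inl_injective,
          Finset.card_image_of_injective _ Sum.inr_injective, Finset.card_univ,
          Fintype.card_fin]
    _ ≤ _ := Finset.card_le_card hsub
  obtain ⟨m', hinj, hmem⟩ := (Finset.all_card_le_biUnion_card_iff_exists_injective t).1 hall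
  set A : Finset V := Finset.univ.filter (fun v => (m' v).isLeft) with hA
  set m : V → V := fun v => ((m' v).getLeft?).getD v with hm
  have hA1 : ∀ v ∈ A, m' v = Sum.inl (m v) := by
    intro v hv
    rw [hA, Finset.mem_filter] at hv
    obtain ⟨u, hu⟩ := Sum.isLeft_iff.1 hv.2
    simp [hm, hu]
  have hA2 : ∀ v ∈ A, G.Adj v (m v) := by
    intro v hv
    have := hmem v
    rw [hA1 v hv, ht] at this
    simp only [Finset.mem_union, Finset.mem_image] at this
    rcases this with ⟨u, hu, hu2⟩ | ⟨j, _, hj⟩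
    · rw [Sum.inl.injEq] at hu2
      rw [← hu2]
      exact (SimpleGraph.mem_neighborFinset _ _ _).1 hu
    · exact absurd hj Sum.inr_ne_inl
  have hAcard : Fintype.card V ≤ A.card + D := by
    have h1 : (Finset.univ \ A).card ≤ D := by
      have := Finset.card_le_card_of_injOn m' (s := Finset.univ \ A)
        (t := Finset.univ.image (Sum.inr : Fin D → V ⊕ Fin D))
        (fun v hv => by
          rw [Finset.mem_coe, Finset.mem_sdiff, hA, Finset.mem_filter] at hv
          have hnl : ¬ (m' v).isLeft := fun h => hv.2 ⟨Finset.mem_univ v, h⟩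
          obtain ⟨j, hj⟩ := Sum.isRight_iff.1 (Sum.not_isLeft.1 hnl)
          rw [hj]
          exact Finset.mem_image_of_mem _ (Finset.mem_univ j))
        (hinj.injOn)
      simpa [Finset.card_image_of_injective _ Sum.inr_injective] using this
    have h2 : (Finset.univ \ A).card = Fintype.card V - A.card := by
      rw [Finset.card_sdiff_of_subset (Finset.subset_univ A), Finset.card_univ]
    have h3 : A.card ≤ Fintype.card V := by
      rw [← Finset.card_univ]; exact Finset.card_le_card (Finset.subset_univ A)
    omega
  have hinjA : ∀ a ∈ A, ∀ b ∈ A, m a = m b → a = b := by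
    intro a ha b hb hab
    apply hinj
    rw [hA1 a ha, hA1 b hb, hab]
  refine ⟨fm A m, fm_frac G A m hA2 hinjA, ?_⟩
  rw [fm_weight G A m hA2]
  have : (Fintype.card V : ℝ) ≤ (A.card : ℝ) + (D : ℝ) := by exact_mod_cast hAcard
  linarith

lemma weight_le_aux (f : Sym2 V → ℝ) (hf : IsFracMatching G f) :
    2 * weight G f ≤ (Fintype.card V : ℝ) - sSup (defSet G) := by
  classical
  set D := sSup (defSet G) with hD
  have hDmem : D ∈ defSet G := Nat.sSup_mem (defSet_nonempty G) (defSet_bddAbove G)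
  obtain ⟨S0, hS0⟩ := hDmem
  set I : Set V := {v | v ∉ S0 ∧ ∀ w, G.Adj v w → w ∈ S0} with hI
  set Ifin : Finset V := I.toFinite.toFinset with hIfin
  set Sfin : Finset V := S0.toFinite.toFinset with hSfin
  have hImem : ∀ v, v ∈ Ifin ↔ v ∈ I := fun v => Set.Finite.mem_toFinset _
  have hSmem : ∀ v, v ∈ Sfin ↔ v ∈ S0 := fun v => Set.Finite.mem_toFinset _
  have hIcard : Ifin.card = iso G S0 := by
    rw [iso, Set.ncard_eq_toFinset_card']
    congr 1
    apply Finset.coe_injective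
    simp [hIfin, hI]
  have hScard : Sfin.card = S0.ncard := by
    rw [hSfin, ← Set.ncard_coe_finset, Set.Finite.coe_toFinset]
  have hISdisj : Disjoint Ifin Sfin := by
    rw [Finset.disjoint_left]
    intro v hv hv2
    exact ((hImem v).1 hv).1 ((hSmem v).1 hv2)
  set g : V → ℝ := fun v => ∑ e ∈ G.edgeFinset, (if v ∈ e then f e else 0) with hg
  have hg1 : ∀ v, g v ≤ 1 := hf.2.2
  have hsum_eq : ∀ s : Finset V,
      ∑ v ∈ s, g v = ∑ e ∈ G.edgeFinset, ((s.filter (fun v => v ∈ e)).card : ℝ) * f e := by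
    intro s
    rw [Finset.sum_comm]
    refine Finset.sum_congr rfl fun e he => ?_
    rw [← Finset.sum_filter, Finset.sum_const, nsmul_eq_mul]
  have hIsum : ∑ v ∈ Ifin, g v ≤ ∑ v ∈ Sfin, g v := by
    rw [hsum_eq, hsum_eq]
    refine Finset.sum_le_sum fun e he => ?_
    have hf0 : 0 ≤ f e := (hf.1 e).1
    refine mul_le_mul_of_nonneg_right ?_ hf0
    revert he
    induction e with
    | _ x y =>
      intro he
      have hxy : G.Adj x y := (SimpleGraph.mem_edgeFinset.1 he)
      by_cases hx : x ∈ I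
      · have hyS : y ∈ S0 := hx.2 y hxy
        have h1 : Ifin.filter (fun v => v ∈ s(x, y)) ⊆ {x} := by
          intro v hv
          rw [Finset.mem_filter] at hv
          rcases Sym2.mem_iff.1 hv.2 with h | h
          · simp [h]
          · exact absurd hyS (h ▸ ((hImem v).1 hv.1).1)
        have h2 : ({y} : Finset V) ⊆ Sfin.filter (fun v => v ∈ s(x, y)) := by
          intro v hv
          rw [Finset.mem_singleton] at hv
          subst hv
          exact Finset.mem_filter.2 ⟨(hSmem v).2 hyS, Sym2.mem_mk_right x v⟩
        calc ((Ifin.filter (fun v => v ∈ s(x, y))).card : ℝ)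
            ≤ ({x} : Finset V).card := by exact_mod_cast Finset.card_le_card h1
        _ = ({y} : Finset V).card := by simp
        _ ≤ _ := by exact_mod_cast Finset.card_le_card h2
      · by_cases hy : y ∈ I
        · have hxS : x ∈ S0 := hy.2 x hxy.symm
          have h1 : Ifin.filter (fun v => v ∈ s(x, y)) ⊆ {y} := by
            intro v hv
            rw [Finset.mem_filter] at hv
            rcases Sym2.mem_iff.1 hv.2 with h | h
            · exact absurd ((hImem v).1 hv.1) (h ▸ hx)
            · simp [h]
          have h2 : ({x} : Finset V) ⊆ Sfin.filter (fun v => v ∈ s(x, y)) := by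
            intro v hv
            rw [Finset.mem_singleton] at hv
            subst hv
            exact Finset.mem_filter.2 ⟨(hSmem v).2 hxS, Sym2.mem_mk_left v y⟩
          calc ((Ifin.filter (fun v => v ∈ s(x, y))).card : ℝ)
              ≤ ({y} : Finset V).card := by exact_mod_cast Finset.card_le_card h1
          _ = ({x} : Finset V).card := by simp
          _ ≤ _ := by exact_mod_cast Finset.card_le_card h2
        · have h1 : Ifin.filter (fun v => v ∈ s(x, y)) = ∅ := by
            rw [Finset.filter_eq_empty_iff]
            intro v hv hmem
            rcases Sym2.mem_iff.1 hmem with h | h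
            · exact (h ▸ hx) ((hImem v).1 hv)
            · exact (h ▸ hy) ((hImem v).1 hv)
          rw [h1]
          simp
  set R : Finset V := Finset.univ \ (Ifin ∪ Sfin) with hR
  have hsplit : ∑ v : V, g v = (∑ v ∈ Ifin, g v) + (∑ v ∈ Sfin, g v) + (∑ v ∈ R, g v) := by
    rw [hR, ← Finset.sum_union hISdisj, ← Finset.sum_sdiff (Finset.subset_univ (Ifin ∪ Sfin))]
    ring
  have hScardle : ∑ v ∈ Sfin, g v ≤ (Sfin.card : ℝ) := by
    calc _ ≤ ∑ _v ∈ Sfin, (1 : ℝ) := Finset.sum_le_sum fun v _ => hg1 v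
    _ = _ := by simp
  have hRcardle : ∑ v ∈ R, g v ≤ (R.card : ℝ) := by
    calc _ ≤ ∑ _v ∈ R, (1 : ℝ) := Finset.sum_le_sum fun v _ => hg1 v
    _ = _ := by simp
  have hcards : Ifin.card + Sfin.card + R.card = Fintype.card V := by
    rw [hR, Finset.card_sdiff_of_subset (Finset.subset_univ _), Finset.card_univ,
      Finset.card_union_of_disjoint hISdisj]
    have : (Ifin ∪ Sfin).card ≤ Fintype.card V := by
      rw [← Finset.card_univ]; exact Finset.card_le_card (Finset.subset_univ _)
    rw [Finset.card_union_of_disjoint hISdisj] at this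
    omega
  have hkey : Ifin.card = Sfin.card + D := by
    rw [hIcard, hScard]; exact hS0
  rw [two_mul_weight]
  have hcast : (Ifin.card : ℝ) = (Sfin.card : ℝ) + (D : ℝ) := by exact_mod_cast hkey
  have hcast2 : (Ifin.card : ℝ) + (Sfin.card : ℝ) + (R.card : ℝ) = (Fintype.card V : ℝ) := by
    exact_mod_cast hcards
  rw [hsplit]
  linarith

end Aux

/-- `2 μ_f(G) = |V(G)| - max{ iso(G-S) - |S| : S ⊆ V(G) }`. -/
theorem stmt7 {V : Type*} [Fintype V] [DecidableEq V] (G : SimpleGraph V)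
    [DecidableRel G.Adj] :
    2 * nuF G =
      (Fintype.card V : ℝ) -
        (Nat.cast (sSup {d : ℕ | ∃ S : Set V, iso G S = S.ncard + d}) : ℝ) := by
  classical
  show 2 * nuF G = (Fintype.card V : ℝ) - ((sSup (defSet G) : ℕ) : ℝ)
  set D := sSup (defSet G) with hD
  obtain ⟨f0, hf0, hw0⟩ := exists_good_matching G
  have hub : ∀ x ∈ weight G '' {f | IsFracMatching G f}, x ≤ ((Fintype.card V : ℝ) - D) / 2 := by
    rintro x ⟨f, hf, rfl⟩
    have := weight_le_aux G f hf
    linarith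
  have hbdd : BddAbove (weight G '' {f | IsFracMatching G f}) := ⟨_, hub⟩
  have hDle : (D : ℝ) ≤ Fintype.card V := by
    have hmem : D ∈ defSet G := Nat.sSup_mem (defSet_nonempty G) (defSet_bddAbove G)
    obtain ⟨S, hS⟩ := hmem
    have h1 := iso_le_card G S
    have h2 : D ≤ Fintype.card V := by omega
    exact_mod_cast h2
  have h1 : nuF G ≤ ((Fintype.card V : ℝ) - D) / 2 := by
    rw [nuF]
    exact Real.sSup_le hub (by linarith)
  have h2 : ((Fintype.card V : ℝ) - D) / 2 ≤ nuF G := by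
    have hmem : weight G f0 ∈ weight G '' {f | IsFracMatching G f} := ⟨f0, hf0, rfl⟩
    have hle := le_csSup hbdd hmem
    rw [nuF]
    linarith
  linarith
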